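/- arXiv:2404.08012 — 5 statements merged into one kernel-verified Lean document; each statement's English description precedes it below -/
import Mathlib

section
/- If f = Id_s * g (Dirichlet convolution, where Id_s(n) = n^s for a fixed natural number s) and the series ∑_{n=1}^∞ |g(n)|/n^{s+1} converges, then ∑_{n ≤ x} f(n) = (x^{s+1}/(s+1)) · ∑_{n=1}^∞ g(n)/n^{s+1} + o(x^{s+1}) as x → ∞. -/
open Filter Finset Topology

lemma aux_pow_sub_pow_le {a b : ℝ} (hb : 0 ≤ b) (hba : b ≤ a) (s : ℕ) :
    a ^ (s + 1) - b ^ (s + 1) ≤ ((s : ℝ) + 1) * a ^ s * (a - b) := by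
  have ha : 0 ≤ a := hb.trans hba
  rw [← geom_sum₂_mul a b (s + 1)]
  have h1 : (∑ i ∈ range (s + 1), a ^ i * b ^ (s + 1 - 1 - i)) ≤ ((s : ℝ) + 1) * a ^ s := by
    calc (∑ i ∈ range (s + 1), a ^ i * b ^ (s + 1 - 1 - i))
        ≤ ∑ _i ∈ range (s + 1), a ^ s := by
          refine Finset.sum_le_sum fun i hi => ?_
          have his : i ≤ s := Nat.lt_succ_iff.mp (mem_range.mp hi)
          calc a ^ i * b ^ (s + 1 - 1 - i) ≤ a ^ i * a ^ (s + 1 - 1 - i) := by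
                exact mul_le_mul_of_nonneg_left (pow_le_pow_left₀ hb hba _) (pow_nonneg ha i)
            _ = a ^ s := by
                rw [← pow_add]
                congr 1
                omega
      _ = ((s : ℝ) + 1) * a ^ s := by
          rw [Finset.sum_const, card_range, nsmul_eq_mul]
          push_cast
          ring
  have h2 : 0 ≤ a - b := sub_nonneg.mpr hba
  exact mul_le_mul_of_nonneg_right h1 h2

lemma aux_le_pow_sub_pow {a b : ℝ} (hb : 0 ≤ b) (hba : b ≤ a) (s : ℕ) :
    ((s : ℝ) + 1) * b ^ s * (a - b) ≤ a ^ (s + 1) - b ^ (s + 1) := by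
  have ha : 0 ≤ a := hb.trans hba
  rw [← geom_sum₂_mul a b (s + 1)]
  have h1 : ((s : ℝ) + 1) * b ^ s ≤ (∑ i ∈ range (s + 1), a ^ i * b ^ (s + 1 - 1 - i)) := by
    calc ((s : ℝ) + 1) * b ^ s = ∑ _i ∈ range (s + 1), b ^ s := by
          rw [Finset.sum_const, card_range, nsmul_eq_mul]; push_cast; ring
      _ ≤ ∑ i ∈ range (s + 1), a ^ i * b ^ (s + 1 - 1 - i) := by
          refine Finset.sum_le_sum fun i hi => ?_
          have his : i ≤ s := Nat.lt_succ_iff.mp (mem_range.mp hi)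
          calc b ^ s = b ^ i * b ^ (s + 1 - 1 - i) := by
                rw [← pow_add]; congr 1; omega
            _ ≤ a ^ i * b ^ (s + 1 - 1 - i) := by
                exact mul_le_mul_of_nonneg_right (pow_le_pow_left₀ hb hba _)
                  (pow_nonneg hb _)
  exact mul_le_mul_of_nonneg_right h1 (sub_nonneg.mpr hba)

lemma aux_sum_pow_bounds (s : ℕ) : ∀ k : ℕ,
    (k : ℝ) ^ (s + 1) / ((s : ℝ) + 1) ≤ (∑ d ∈ Icc 1 k, (d : ℝ) ^ s) ∧
    (∑ d ∈ Icc 1 k, (d : ℝ) ^ s) ≤ (k : ℝ) ^ (s + 1) / ((s : ℝ) + 1) + (k : ℝ) ^ s := by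
  have hs1 : (0 : ℝ) < (s : ℝ) + 1 := by positivity
  intro k
  induction k with
  | zero => simp
  | succ k ih =>
    rw [Finset.sum_Icc_succ_top (Nat.succ_le_succ (Nat.zero_le k))]
    have hk0 : (0 : ℝ) ≤ (k : ℝ) := Nat.cast_nonneg k
    have hub := aux_pow_sub_pow_le hk0 (by linarith : (k : ℝ) ≤ (k : ℝ) + 1) s
    have hlb := aux_le_pow_sub_pow hk0 (by linarith : (k : ℝ) ≤ (k : ℝ) + 1) s
    rw [add_sub_cancel_left, mul_one] at hub hlb
    push_cast
    constructor
    · have h3 : (((k : ℝ) + 1) ^ (s + 1) - (k : ℝ) ^ (s + 1)) / ((s : ℝ) + 1)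
          ≤ ((k : ℝ) + 1) ^ s := by
        rw [div_le_iff₀ hs1]; linarith
      have h4 := ih.1
      rw [sub_div] at h3
      linarith
    · have h3 : (k : ℝ) ^ s ≤ (((k : ℝ) + 1) ^ (s + 1) - (k : ℝ) ^ (s + 1)) / ((s : ℝ) + 1) := by
        rw [le_div_iff₀ hs1]; linarith
      have h4 := ih.2
      rw [sub_div] at h3
      linarith

lemma aux_est (s : ℕ) {a : ℝ} {k : ℕ} (hk : (k : ℝ) ≤ a) (hak : a - (k : ℝ) ≤ 1) :
    |(∑ d ∈ Icc 1 k, (d : ℝ) ^ s) - a ^ (s + 1) / ((s : ℝ) + 1)| ≤ 2 * a ^ s := by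
  have hs1 : (0 : ℝ) < (s : ℝ) + 1 := by positivity
  obtain ⟨h1, h2⟩ := aux_sum_pow_bounds s k
  have hk0 : (0 : ℝ) ≤ (k : ℝ) := Nat.cast_nonneg k
  have ha0 : 0 ≤ a := hk0.trans hk
  have hpp := aux_pow_sub_pow_le hk0 hk s
  have hks : (k : ℝ) ^ s ≤ a ^ s := pow_le_pow_left₀ hk0 hk s
  have has : 0 ≤ a ^ s := pow_nonneg ha0 s
  have hka : (k : ℝ) ^ (s + 1) ≤ a ^ (s + 1) := pow_le_pow_left₀ hk0 hk _
  rw [abs_le]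
  constructor
  · have h3 : (a ^ (s + 1) - (k : ℝ) ^ (s + 1)) / ((s : ℝ) + 1) ≤ a ^ s := by
      rw [div_le_iff₀ hs1]
      have h4 : ((s : ℝ) + 1) * a ^ s * (a - (k : ℝ)) ≤ ((s : ℝ) + 1) * a ^ s * 1 :=
        mul_le_mul_of_nonneg_left hak (by positivity)
      nlinarith
    rw [sub_div] at h3
    have h5 : (k : ℝ) ^ (s + 1) / ((s : ℝ) + 1) ≤ (∑ d ∈ Icc 1 k, (d : ℝ) ^ s) := h1
    linarith
  · have h3 : (k : ℝ) ^ (s + 1) / ((s : ℝ) + 1) ≤ a ^ (s + 1) / ((s : ℝ) + 1) := by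
      gcongr
    linarith

lemma aux_swap (N : ℕ) (F : ℕ → ℕ → ℂ) :
    ∑ n ∈ Icc 1 N, ∑ d ∈ n.divisors, F d (n / d)
      = ∑ m ∈ Icc 1 N, ∑ d ∈ Icc 1 (N / m), F d m := by
  rw [Finset.sum_sigma', Finset.sum_sigma']
  refine Finset.sum_nbij' (fun p => ⟨p.1 / p.2, p.2⟩) (fun q => ⟨q.2 * q.1, q.2⟩)
    ?_ ?_ ?_ ?_ ?_
  · rintro ⟨n, d⟩ hp
    simp only [Finset.mem_sigma, Finset.mem_Icc, Nat.mem_divisors] at hp ⊢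
    obtain ⟨⟨hn1, hnN⟩, hd, hn0⟩ := hp
    have hd0 : 0 < d := Nat.pos_of_dvd_of_pos hd (by omega)
    have hdn : d ≤ n := Nat.le_of_dvd (by omega) hd
    refine ⟨⟨Nat.one_le_div_iff hd0 |>.mpr hdn, le_trans (Nat.div_le_self n d) hnN⟩,
      ?_, ?_⟩
    · exact hd0
    · rw [Nat.le_div_iff_mul_le (Nat.div_pos hdn hd0)]
      rw [Nat.mul_div_cancel' hd]
      exact hnN
  · rintro ⟨m, d⟩ hq
    simp only [Finset.mem_sigma, Finset.mem_Icc, Nat.mem_divisors] at hq ⊢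
    obtain ⟨⟨hm1, hmN⟩, hd1, hdm⟩ := hq
    have hdmN : d * m ≤ N := (Nat.le_div_iff_mul_le (by omega)).mp hdm
    exact ⟨⟨Nat.mul_pos (by omega) (by omega), hdmN⟩, ⟨dvd_mul_right d m, Nat.mul_ne_zero (by omega) (by omega)⟩⟩
  · rintro ⟨n, d⟩ hp
    simp only [Finset.mem_sigma, Finset.mem_Icc, Nat.mem_divisors] at hp
    obtain ⟨⟨hn1, hnN⟩, hd, hn0⟩ := hp
    simp only [Sigma.mk.inj_iff, heq_eq_eq, and_true]
    rw [Nat.mul_div_cancel' hd]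
  · rintro ⟨m, d⟩ hq
    simp only [Finset.mem_sigma, Finset.mem_Icc] at hq
    obtain ⟨⟨hm1, hmN⟩, hd1, hdm⟩ := hq
    simp only [Sigma.mk.inj_iff, heq_eq_eq, and_true]
    rw [Nat.mul_div_cancel_left m (by omega : 0 < d)]
  · rintro ⟨n, d⟩ _
    rfl

lemma aux_reindex {M : Type*} [AddCommMonoid M] (h : ℕ → M) (N : ℕ) :
    ∑ m ∈ Icc 1 N, h m = ∑ j ∈ range N, h (j + 1) := by
  induction N with
  | zero => simp
  | succ N ih =>
    rw [Finset.sum_Icc_succ_top (Nat.succ_le_succ (Nat.zero_le N)), Finset.sum_range_succ, ih]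

/-- Generalized Wintner theorem: if `f = Id_s * g` (Dirichlet convolution) and
`∑ |g(n)|/n^(s+1)` converges, then `∑_{n ≤ x} f n = x^(s+1)/(s+1) · ∑ g(n)/n^(s+1) + o(x^(s+1))`. -/
theorem generalized_wintner (s : ℕ) (f g : ℕ → ℂ)
    (hf : ∀ n : ℕ, 1 ≤ n → f n = ∑ d ∈ n.divisors, (d : ℂ) ^ s * g (n / d))
    (hg : Summable fun n : ℕ => ‖g (n + 1)‖ / ((n : ℝ) + 1) ^ (s + 1)) :
    (fun x : ℝ => (∑ n ∈ Finset.Icc 1 ⌊x⌋₊, f n) -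
        (x : ℂ) ^ (s + 1) / (s + 1) * ∑' n : ℕ, g (n + 1) / ((n : ℂ) + 1) ^ (s + 1))
      =o[atTop] fun x : ℝ => x ^ (s + 1) := by
  have hs1 : (0 : ℝ) < (s : ℝ) + 1 := by positivity
  set c : ℕ → ℂ := fun j => g (j + 1) / ((j : ℂ) + 1) ^ (s + 1) with hcdef
  set L : ℂ := ∑' n : ℕ, c n with hLdef
  -- norms of c
  have hnorm : ∀ j : ℕ, ‖c j‖ = ‖g (j + 1)‖ / ((j : ℝ) + 1) ^ (s + 1) := by
    intro j
    have h1 : ((j : ℂ) + 1) = (((j : ℝ) + 1 : ℝ) : ℂ) := by push_cast; ring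
    rw [hcdef]
    rw [norm_div, norm_pow, h1, Complex.norm_real, Real.norm_eq_abs,
      abs_of_nonneg (by positivity)]
  have hc : Summable c := Summable.of_norm ((summable_congr fun j => hnorm j).mpr hg)
  have hP : Tendsto (fun N : ℕ => ∑ j ∈ range N, c j) atTop (𝓝 L) :=
    hc.hasSum.tendsto_sum_nat
  have hfloor : Tendsto (fun x : ℝ => ⌊x⌋₊) atTop atTop := tendsto_nat_floor_atTop
  have htail : Tendsto (fun x : ℝ => ‖L - ∑ j ∈ range ⌊x⌋₊, c j‖) atTop (𝓝 0) := by
    have h1 : Tendsto (fun x : ℝ => L - ∑ j ∈ range ⌊x⌋₊, c j) atTop (𝓝 (L - L)) :=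
      tendsto_const_nhds.sub (hP.comp hfloor)
    rw [sub_self] at h1
    simpa using h1.norm
  -- D / x → 0
  have hD : Tendsto
      (fun x : ℝ => (∑ j ∈ range ⌊x⌋₊, ‖g (j + 1)‖ / ((j : ℝ) + 1) ^ s) / x)
      atTop (𝓝 0) := by
    set a : ℕ → ℝ := fun j => ‖g (j + 1)‖ / ((j : ℝ) + 1) ^ (s + 1) with hadef
    have ha0 : ∀ j, 0 ≤ a j := fun j => by positivity
    set F : ℝ → ℕ → ℝ := fun x j => a j * min (((j : ℝ) + 1) / x) 1 with hFdef
    have hF0 : ∀ x : ℝ, 1 ≤ x → ∀ j, 0 ≤ F x j := fun x hx j =>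
      mul_nonneg (ha0 j) (le_min (div_nonneg (by positivity) (by linarith)) zero_le_one)
    have hFle : ∀ x : ℝ, ∀ j, F x j ≤ a j := fun x j => by
      calc F x j ≤ a j * 1 := mul_le_mul_of_nonneg_left (min_le_right _ _) (ha0 j)
        _ = a j := mul_one _
    have h1 : Tendsto (fun x : ℝ => ∑' j, F x j) atTop (𝓝 0) := by
      have h2 := tendsto_tsum_of_dominated_convergence (f := F) (g := fun _ => (0 : ℝ))
        (bound := a) (𝓕 := atTop) hg ?_ ?_
      · simpa using h2
      · intro j
        have h3 : Tendsto (fun x : ℝ => ((j : ℝ) + 1) / x) atTop (𝓝 0) :=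
          tendsto_const_nhds.div_atTop tendsto_id
        have h4 : Tendsto (fun x : ℝ => min (((j : ℝ) + 1) / x) 1) atTop (𝓝 (min 0 1)) :=
          h3.min tendsto_const_nhds
        rw [min_eq_left zero_le_one] at h4
        simpa using h4.const_mul (a j)
      · filter_upwards [eventually_ge_atTop (1 : ℝ)] with x hx
        intro j
        rw [Real.norm_eq_abs, abs_of_nonneg (hF0 x hx j)]
        exact hFle x j
    apply squeeze_zero' ?_ ?_ h1
    · filter_upwards [eventually_ge_atTop (1 : ℝ)] with x hx
      exact div_nonneg (Finset.sum_nonneg fun j _ => by positivity) (by linarith)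
    · filter_upwards [eventually_ge_atTop (1 : ℝ)] with x hx
      have hx0 : (0 : ℝ) < x := by linarith
      have hsumm : Summable (F x) := Summable.of_nonneg_of_le (hF0 x hx) (hFle x) hg
      calc (∑ j ∈ range ⌊x⌋₊, ‖g (j + 1)‖ / ((j : ℝ) + 1) ^ s) / x
          = ∑ j ∈ range ⌊x⌋₊, F x j := by
            rw [Finset.sum_div]
            refine Finset.sum_congr rfl fun j hj => ?_
            have hj1 : (j : ℝ) + 1 ≤ x := by
              have h5 : (j + 1 : ℕ) ≤ ⌊x⌋₊ := mem_range.mp hj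
              calc (j : ℝ) + 1 = ((j + 1 : ℕ) : ℝ) := by push_cast; ring
                _ ≤ (⌊x⌋₊ : ℝ) := by exact_mod_cast h5
                _ ≤ x := Nat.floor_le hx0.le
            rw [hFdef]
            simp only
            rw [min_eq_left (by rw [div_le_one hx0]; exact hj1), hadef]
            have hj0 : ((j : ℝ) + 1) ≠ 0 := by positivity
            field_simp
            rw [pow_succ]
            ring
        _ ≤ ∑' j, F x j := Summable.sum_le_tsum (range ⌊x⌋₊) (fun j _ => hF0 x hx j) hsumm
  -- the combined bound tends to 0
  have hB : Tendsto
      (fun x : ℝ => 2 * ((∑ j ∈ range ⌊x⌋₊, ‖g (j + 1)‖ / ((j : ℝ) + 1) ^ s) / x)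
        + ‖L - ∑ j ∈ range ⌊x⌋₊, c j‖ / ((s : ℝ) + 1)) atTop (𝓝 0) := by
    have := (hD.const_mul 2).add (htail.div_const ((s : ℝ) + 1))
    simpa using this
  rw [Asymptotics.isLittleO_iff]
  intro ε hε
  filter_upwards [eventually_ge_atTop (1 : ℝ), hB.eventually (gt_mem_nhds hε)] with x hx1 hxB
  have hx0 : (0 : ℝ) < x := by linarith
  set N := ⌊x⌋₊ with hNdef
  -- Step 1: convolution identity
  have key1 : ∑ n ∈ Icc 1 N, f n
      = ∑ m ∈ Icc 1 N, (∑ d ∈ Icc 1 (N / m), (d : ℂ) ^ s) * g m := by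
    rw [Finset.sum_congr rfl fun n hn => hf n (mem_Icc.mp hn).1,
      aux_swap N (fun d m => (d : ℂ) ^ s * g m)]
    exact Finset.sum_congr rfl fun m _ => (Finset.sum_mul _ _ _).symm
  -- partial sum of c over Icc
  have hrange_g : ∑ m ∈ Icc 1 N, g m / (m : ℂ) ^ (s + 1) = ∑ j ∈ range N, c j := by
    rw [aux_reindex (fun m => g m / (m : ℂ) ^ (s + 1)) N]
    refine Finset.sum_congr rfl fun j _ => ?_
    rw [hcdef]
    push_cast
    ring_nf
  -- decomposition
  have hBQ : ∑ m ∈ Icc 1 N, (x : ℂ) ^ (s + 1) / ((s : ℂ) + 1) / (m : ℂ) ^ (s + 1) * g m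
      = (x : ℂ) ^ (s + 1) / ((s : ℂ) + 1) * ∑ m ∈ Icc 1 N, g m / (m : ℂ) ^ (s + 1) := by
    rw [Finset.mul_sum]
    exact Finset.sum_congr rfl fun m _ => by ring
  have hdecomp : (∑ n ∈ Icc 1 N, f n) - (x : ℂ) ^ (s + 1) / ((s : ℂ) + 1) * L
      = (∑ m ∈ Icc 1 N, ((∑ d ∈ Icc 1 (N / m), (d : ℂ) ^ s)
            - (x : ℂ) ^ (s + 1) / ((s : ℂ) + 1) / (m : ℂ) ^ (s + 1)) * g m)
        - (x : ℂ) ^ (s + 1) / ((s : ℂ) + 1) * (L - ∑ j ∈ range N, c j) := by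
    rw [key1, ← hrange_g]
    rw [show (∑ m ∈ Icc 1 N, ((∑ d ∈ Icc 1 (N / m), (d : ℂ) ^ s)
            - (x : ℂ) ^ (s + 1) / ((s : ℂ) + 1) / (m : ℂ) ^ (s + 1)) * g m)
        = (∑ m ∈ Icc 1 N, (∑ d ∈ Icc 1 (N / m), (d : ℂ) ^ s) * g m)
          - ∑ m ∈ Icc 1 N, (x : ℂ) ^ (s + 1) / ((s : ℂ) + 1) / (m : ℂ) ^ (s + 1) * g m by
      rw [← Finset.sum_sub_distrib]
      exact Finset.sum_congr rfl fun m _ => by ring]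
    rw [hBQ]
    ring
  -- termwise estimate
  have hterm : ∀ m ∈ Icc 1 N,
      ‖((∑ d ∈ Icc 1 (N / m), (d : ℂ) ^ s)
          - (x : ℂ) ^ (s + 1) / ((s : ℂ) + 1) / (m : ℂ) ^ (s + 1)) * g m‖
        ≤ 2 * x ^ s * (‖g m‖ / (m : ℝ) ^ s) := by
    intro m hm
    obtain ⟨hm1, hmN⟩ := mem_Icc.mp hm
    have hm0 : (0 : ℝ) < (m : ℝ) := by exact_mod_cast hm1
    have hcast : ((∑ d ∈ Icc 1 (N / m), (d : ℂ) ^ s)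
          - (x : ℂ) ^ (s + 1) / ((s : ℂ) + 1) / (m : ℂ) ^ (s + 1))
        = ((((∑ d ∈ Icc 1 (N / m), (d : ℝ) ^ s)
          - (x / (m : ℝ)) ^ (s + 1) / ((s : ℝ) + 1)) : ℝ) : ℂ) := by
      push_cast
      rw [div_pow, div_right_comm]
    have hkx : ((N / m : ℕ) : ℝ) ≤ x / (m : ℝ) := by
      rw [le_div_iff₀ hm0]
      calc ((N / m : ℕ) : ℝ) * (m : ℝ) = ((N / m * m : ℕ) : ℝ) := by push_cast; ring
        _ ≤ (N : ℝ) := by exact_mod_cast Nat.div_mul_le_self N m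
        _ ≤ x := Nat.floor_le hx0.le
    have hk1 : x / (m : ℝ) - ((N / m : ℕ) : ℝ) ≤ 1 := by
      rw [sub_le_iff_le_add, div_le_iff₀ hm0]
      have h5 : N < N / m * m + m := Nat.lt_div_mul_add (by omega)
      have h6 : (N : ℝ) + 1 ≤ ((N / m * m + m : ℕ) : ℝ) := by exact_mod_cast h5
      have h7 : x < (N : ℝ) + 1 := Nat.lt_floor_add_one x
      refine le_of_lt ?_
      calc x < (N : ℝ) + 1 := h7
        _ ≤ ((N / m * m + m : ℕ) : ℝ) := h6
        _ = (1 + ((N / m : ℕ) : ℝ)) * (m : ℝ) := by push_cast; ring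
    have hest := aux_est s hkx hk1
    rw [norm_mul, hcast, Complex.norm_real, Real.norm_eq_abs]
    calc |(∑ d ∈ Icc 1 (N / m), (d : ℝ) ^ s) - (x / (m : ℝ)) ^ (s + 1) / ((s : ℝ) + 1)|
          * ‖g m‖
        ≤ 2 * (x / (m : ℝ)) ^ s * ‖g m‖ :=
          mul_le_mul_of_nonneg_right hest (norm_nonneg _)
      _ = 2 * x ^ s * (‖g m‖ / (m : ℝ) ^ s) := by
          rw [div_pow]
          ring
  -- sum estimate
  have hrange_D : ∑ m ∈ Icc 1 N, ‖g m‖ / (m : ℝ) ^ s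
      = ∑ j ∈ range N, ‖g (j + 1)‖ / ((j : ℝ) + 1) ^ s := by
    rw [aux_reindex (fun m => ‖g m‖ / (m : ℝ) ^ s) N]
    refine Finset.sum_congr rfl fun j _ => ?_
    push_cast
    ring_nf
  have hsum : ‖∑ m ∈ Icc 1 N, ((∑ d ∈ Icc 1 (N / m), (d : ℂ) ^ s)
        - (x : ℂ) ^ (s + 1) / ((s : ℂ) + 1) / (m : ℂ) ^ (s + 1)) * g m‖
      ≤ 2 * x ^ s * ∑ j ∈ range N, ‖g (j + 1)‖ / ((j : ℝ) + 1) ^ s := by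
    calc ‖∑ m ∈ Icc 1 N, ((∑ d ∈ Icc 1 (N / m), (d : ℂ) ^ s)
          - (x : ℂ) ^ (s + 1) / ((s : ℂ) + 1) / (m : ℂ) ^ (s + 1)) * g m‖
        ≤ ∑ m ∈ Icc 1 N, ‖((∑ d ∈ Icc 1 (N / m), (d : ℂ) ^ s)
          - (x : ℂ) ^ (s + 1) / ((s : ℂ) + 1) / (m : ℂ) ^ (s + 1)) * g m‖ :=
          norm_sum_le _ _
      _ ≤ ∑ m ∈ Icc 1 N, 2 * x ^ s * (‖g m‖ / (m : ℝ) ^ s) := Finset.sum_le_sum hterm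
      _ = 2 * x ^ s * ∑ m ∈ Icc 1 N, ‖g m‖ / (m : ℝ) ^ s := by rw [← Finset.mul_sum]
      _ = 2 * x ^ s * ∑ j ∈ range N, ‖g (j + 1)‖ / ((j : ℝ) + 1) ^ s := by rw [hrange_D]
  -- norm of the prefactor
  have hpre : ‖(x : ℂ) ^ (s + 1) / ((s : ℂ) + 1)‖ = x ^ (s + 1) / ((s : ℝ) + 1) := by
    have h1 : ((s : ℂ) + 1) = (((s : ℝ) + 1 : ℝ) : ℂ) := by push_cast; ring
    rw [norm_div, norm_pow, h1, Complex.norm_real, Complex.norm_real,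
      Real.norm_eq_abs, Real.norm_eq_abs, abs_of_nonneg hx0.le, abs_of_nonneg hs1.le]
  -- final chain
  have hmain : ‖(∑ n ∈ Icc 1 N, f n) - (x : ℂ) ^ (s + 1) / ((s : ℂ) + 1) * L‖
      ≤ x ^ (s + 1) *
        (2 * ((∑ j ∈ range N, ‖g (j + 1)‖ / ((j : ℝ) + 1) ^ s) / x)
          + ‖L - ∑ j ∈ range N, c j‖ / ((s : ℝ) + 1)) := by
    rw [hdecomp]
    calc ‖(∑ m ∈ Icc 1 N, ((∑ d ∈ Icc 1 (N / m), (d : ℂ) ^ s)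
            - (x : ℂ) ^ (s + 1) / ((s : ℂ) + 1) / (m : ℂ) ^ (s + 1)) * g m)
          - (x : ℂ) ^ (s + 1) / ((s : ℂ) + 1) * (L - ∑ j ∈ range N, c j)‖
        ≤ ‖∑ m ∈ Icc 1 N, ((∑ d ∈ Icc 1 (N / m), (d : ℂ) ^ s)
            - (x : ℂ) ^ (s + 1) / ((s : ℂ) + 1) / (m : ℂ) ^ (s + 1)) * g m‖
          + ‖(x : ℂ) ^ (s + 1) / ((s : ℂ) + 1) * (L - ∑ j ∈ range N, c j)‖ :=
          norm_sub_le _ _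
      _ ≤ 2 * x ^ s * (∑ j ∈ range N, ‖g (j + 1)‖ / ((j : ℝ) + 1) ^ s)
          + x ^ (s + 1) / ((s : ℝ) + 1) * ‖L - ∑ j ∈ range N, c j‖ := by
          rw [norm_mul, hpre]
          exact add_le_add hsum le_rfl
      _ = x ^ (s + 1) *
          (2 * ((∑ j ∈ range N, ‖g (j + 1)‖ / ((j : ℝ) + 1) ^ s) / x)
            + ‖L - ∑ j ∈ range N, c j‖ / ((s : ℝ) + 1)) := by
          field_simp
          ring
  have hnorm_rhs : ‖x ^ (s + 1)‖ = x ^ (s + 1) := by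
    rw [Real.norm_eq_abs, abs_of_nonneg (by positivity)]
  rw [hnorm_rhs]
  have hεx : x ^ (s + 1) *
        (2 * ((∑ j ∈ range N, ‖g (j + 1)‖ / ((j : ℝ) + 1) ^ s) / x)
          + ‖L - ∑ j ∈ range N, c j‖ / ((s : ℝ) + 1)) ≤ ε * x ^ (s + 1) := by
    rw [mul_comm (ε) (x ^ (s + 1))]
    exact mul_le_mul_of_nonneg_left hxB.le (by positivity)
  calc ‖(∑ n ∈ Icc 1 N, f n) - (x : ℂ) ^ (s + 1) / ((s : ℂ) + 1) * L‖
      ≤ x ^ (s + 1) *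
        (2 * ((∑ j ∈ range N, ‖g (j + 1)‖ / ((j : ℝ) + 1) ^ s) / x)
          + ‖L - ∑ j ∈ range N, c j‖ / ((s : ℝ) + 1)) := hmain
    _ ≤ ε * x ^ (s + 1) := hεx
end

section
/- If g : ℕ → ℂ satisfies ∑_{n=1}^∞ |g(n)|/n < ∞, then the arithmetic function f(n) = ∑_{d|n} g(d) has an asymptotic mean value: lim_{x→∞} (1/x) ∑_{n ≤ x} f(n) = ∑_{n=1}^∞ g(n)/n. (Wintner's theorem, s = 0 case.) -/
open Filter Finset

private lemma wintner_swap (g : ℕ → ℂ) (N : ℕ) :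
    ∑ n ∈ Finset.Icc 1 N, ∑ d ∈ n.divisors, g d
      = ∑ d ∈ Finset.Icc 1 N, g d * (N / d : ℕ) := by
  have h1 : Finset.Icc 1 N = Finset.Ioc 0 N := rfl
  rw [h1]
  have key : ∀ n ∈ Finset.Ioc 0 N, ∑ d ∈ n.divisors, g d
      = ∑ d ∈ Finset.Ioc 0 N, if d ∣ n then g d else 0 := by
    intro n hn
    simp only [Finset.mem_Ioc] at hn
    rw [← Finset.sum_filter]
    congr 1
    ext d
    simp only [Nat.mem_divisors, Finset.mem_filter, Finset.mem_Ioc]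
    constructor
    · rintro ⟨hd, hn0⟩
      exact ⟨⟨Nat.pos_of_dvd_of_pos hd hn.1, (Nat.le_of_dvd hn.1 hd).trans hn.2⟩, hd⟩
    · rintro ⟨⟨h0, _⟩, hd⟩
      exact ⟨hd, hn.1.ne'⟩
  rw [Finset.sum_congr rfl key, Finset.sum_comm]
  refine Finset.sum_congr rfl fun d hd => ?_
  rw [← Finset.sum_filter, Finset.sum_const, ← Nat.Ioc_filter_dvd_card_eq_div N d]
  simp [mul_comm]

private lemma wintner_ratio (d : ℕ) (hd : 0 < d) :
    Tendsto (fun x : ℝ => ((⌊x⌋₊ / d : ℕ) : ℝ) / x) atTop (nhds (1 / d)) := by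
  have hdr : (0:ℝ) < d := Nat.cast_pos.mpr hd
  have h1 : Tendsto (fun x : ℝ => x / d) atTop atTop :=
    Tendsto.atTop_div_const hdr tendsto_id
  have h2 : Tendsto (fun x : ℝ => ((⌊x / d⌋₊ : ℝ) / (x / d)) * (1 / d)) atTop
      (nhds (1 * (1 / d))) :=
    (tendsto_nat_floor_div_atTop.comp h1).mul_const _
  rw [one_mul] at h2
  refine h2.congr' ?_
  filter_upwards [eventually_gt_atTop (0:ℝ)] with x hx
  rw [Nat.floor_div_natCast]
  field_simp

/-- Wintner's theorem: if `∑ |g(n)|/n < ∞` and `f(n) = ∑_{d∣n} g(d)`, then `f` has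
asymptotic mean value `∑ g(n)/n`. -/
theorem wintner (f g : ℕ → ℂ)
    (hf : ∀ n : ℕ, 1 ≤ n → f n = ∑ d ∈ n.divisors, g d)
    (hg : Summable fun n : ℕ => ‖g (n + 1)‖ / ((n : ℝ) + 1)) :
    Tendsto (fun x : ℝ => (∑ n ∈ Finset.Icc 1 ⌊x⌋₊, f n) / (x : ℂ)) atTop
      (nhds (∑' n : ℕ, g (n + 1) / ((n : ℂ) + 1))) := by
  set F : ℝ → ℕ → ℂ := fun x k => g (k + 1) * (((⌊x⌋₊ / (k + 1) : ℕ) : ℝ) / x : ℝ) with hF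
  -- pointwise limits
  have hlim : ∀ k : ℕ, Tendsto (F · k) atTop (nhds (g (k + 1) / ((k : ℂ) + 1))) := by
    intro k
    have h1 := wintner_ratio (k + 1) k.succ_pos
    have h2 : Tendsto (fun x : ℝ => ((((⌊x⌋₊ / (k + 1) : ℕ) : ℝ) / x : ℝ) : ℂ)) atTop
        (nhds (((1 / ((k + 1 : ℕ) : ℝ) : ℝ) : ℂ))) :=
      (Complex.continuous_ofReal.tendsto _).comp h1
    have h3 := h2.const_mul (g (k + 1))
    convert h3 using 2
    push_cast
    rw [mul_one_div]
  -- bound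
  have hbound : ∀ᶠ x : ℝ in atTop, ∀ k : ℕ, ‖F x k‖ ≤ ‖g (k + 1)‖ / ((k : ℝ) + 1) := by
    filter_upwards [eventually_ge_atTop (1:ℝ)] with x hx k
    have hx0 : (0:ℝ) < x := lt_of_lt_of_le one_pos hx
    have hdr : (0:ℝ) < (k : ℝ) + 1 := by positivity
    have hratio : ((⌊x⌋₊ / (k + 1) : ℕ) : ℝ) / x ≤ 1 / ((k : ℝ) + 1) := by
      rw [div_le_div_iff₀ hx0 hdr, one_mul]
      have h1 : ((⌊x⌋₊ / (k + 1)) * (k + 1) : ℕ) ≤ ⌊x⌋₊ := Nat.div_mul_le_self _ _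
      have h2 : ((⌊x⌋₊ : ℝ)) ≤ x := Nat.floor_le hx0.le
      calc ((⌊x⌋₊ / (k + 1) : ℕ) : ℝ) * ((k : ℝ) + 1)
          = (((⌊x⌋₊ / (k + 1)) * (k + 1) : ℕ) : ℝ) := by push_cast; ring
        _ ≤ (⌊x⌋₊ : ℝ) := by exact_mod_cast h1
        _ ≤ x := h2
    have hratio0 : (0:ℝ) ≤ ((⌊x⌋₊ / (k + 1) : ℕ) : ℝ) / x := by positivity
    rw [hF]
    simp only [norm_mul, Complex.norm_real, Real.norm_eq_abs, abs_of_nonneg hratio0]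
    rw [div_eq_mul_one_div ‖g (k+1)‖]
    exact mul_le_mul_of_nonneg_left hratio (norm_nonneg _)
  have main := tendsto_tsum_of_dominated_convergence hg hlim hbound
  refine main.congr' ?_
  filter_upwards [eventually_ge_atTop (1:ℝ)] with x hx
  have hx0 : (0:ℝ) < x := lt_of_lt_of_le one_pos hx
  have hxne : (x : ℂ) ≠ 0 := by exact_mod_cast hx0.ne'
  set N := ⌊x⌋₊ with hN
  -- tsum is a finite sum
  have hsupp : ∀ k : ℕ, k ∉ Finset.range N → F x k = 0 := by
    intro k hk
    simp only [Finset.mem_range, not_lt] at hk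
    have : N / (k + 1) = 0 := Nat.div_eq_of_lt (by omega)
    simp [hF, ← hN, this]
  rw [tsum_eq_sum hsupp]
  -- rewrite the RHS
  have h1 : ∑ n ∈ Finset.Icc 1 N, f n = ∑ n ∈ Finset.Icc 1 N, ∑ d ∈ n.divisors, g d := by
    refine Finset.sum_congr rfl fun n hn => hf n ?_
    exact (Finset.mem_Icc.mp hn).1
  rw [h1, wintner_swap g N]
  rw [← Finset.Ico_add_one_right_eq_Icc, Finset.sum_Ico_eq_sum_range]
  simp only [Nat.add_sub_cancel]
  rw [Finset.sum_div]
  refine Finset.sum_congr rfl fun k hk => ?_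
  rw [hF]
  simp only [add_comm 1 k]
  rw [mul_div_assoc]
  congr 1
  push_cast
  ring
end

section
/- Kronecker's lemma for Dirichlet series: if f : ℕ → ℂ is an arithmetic function, s is a complex number with Re s > 0, and the series ∑_{n=1}^∞ f(n)/n^s converges, then lim_{x→∞} (1/x^s) ∑_{n ≤ x} f(n) = 0; equivalently ∑_{n ≤ x} f(n) = o(x^s) as x → ∞. -/
open Filter Finset

open intervalIntegral Asymptotics

lemma cpow_diff_norm_le (s : ℂ) (hs : 0 < s.re) {a b : ℝ} (ha : 0 < a) (hab : a ≤ b) :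
    ‖(b:ℂ)^s - (a:ℂ)^s‖ ≤ (‖s‖/s.re) * (b^s.re - a^s.re) := by
  have hs0 : s ≠ 0 := fun h => by simp [h] at hs
  have h1 : ∫ x in a..b, (x:ℂ)^(s-1) = ((b:ℂ)^s - (a:ℂ)^s) / s := by
    rw [integral_cpow (Or.inl (by simp [hs]))]
    norm_num
  have h2 : ∫ x in a..b, (x:ℝ)^(s.re-1) = (b^s.re - a^s.re) / s.re := by
    rw [integral_rpow (Or.inl (by linarith))]; norm_num
  have h3 : ‖(b:ℂ)^s - (a:ℂ)^s‖ = ‖s‖ * ‖∫ x in a..b, (x:ℂ)^(s-1)‖ := by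
    rw [h1, ← norm_mul, mul_div_cancel₀ _ hs0]
  rw [h3]
  have h4 : ‖∫ x in a..b, (x:ℂ)^(s-1)‖ ≤ ∫ x in a..b, ‖(x:ℂ)^(s-1)‖ :=
    intervalIntegral.norm_integral_le_integral_norm hab
  have h5 : ∫ x in a..b, ‖(x:ℂ)^(s-1)‖ = ∫ x in a..b, (x:ℝ)^(s.re-1) := by
    apply intervalIntegral.integral_congr
    intro x hx
    have hx0 : 0 < x := lt_of_lt_of_le ha (by rw [Set.uIcc_of_le hab] at hx; exact hx.1)
    beta_reduce
    rw [Complex.norm_cpow_eq_rpow_re_of_pos hx0]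
    simp
  rw [h5, h2] at h4
  calc ‖s‖ * ‖∫ x in a..b, (x:ℂ)^(s-1)‖ ≤ ‖s‖ * ((b^s.re - a^s.re)/s.re) :=
        mul_le_mul_of_nonneg_left h4 (norm_nonneg s)
    _ = (‖s‖/s.re) * (b^s.re - a^s.re) := by ring

-- telescoping sum of weights
lemma weight_sum (σ : ℝ) (hσ : 0 < σ) (N : ℕ) :
    ∑ n ∈ range N, (((n:ℝ)+1)^σ - (n:ℝ)^σ) = (N:ℝ)^σ := by
  have := Finset.sum_range_sub (f := fun n : ℕ => (n:ℝ)^σ) N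
  simp only [Nat.cast_zero, Real.zero_rpow hσ.ne', sub_zero] at this
  rw [← this]
  apply Finset.sum_congr rfl
  intro i _
  push_cast
  ring_nf

lemma aux_sum_o (σ : ℝ) (hσ : 0 < σ) (u : ℕ → ℂ)
    (h : u =o[atTop] (fun n : ℕ => ((n:ℝ)+1)^σ - (n:ℝ)^σ)) :
    (fun N : ℕ => ∑ n ∈ range N, u n) =o[atTop] (fun N : ℕ => (N:ℝ)^σ) := by
  have hg : ∀ n : ℕ, 0 ≤ ((n:ℝ)+1)^σ - (n:ℝ)^σ := by
    intro n
    have := Real.rpow_le_rpow (by positivity) (by linarith : (n:ℝ) ≤ (n:ℝ)+1) hσ.le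
    linarith
  have h'g : Tendsto (fun N : ℕ => ∑ n ∈ range N, (((n:ℝ)+1)^σ - (n:ℝ)^σ)) atTop atTop := by
    simp only [weight_sum σ hσ]
    exact (tendsto_rpow_atTop hσ).comp tendsto_natCast_atTop_atTop
  have := h.sum_range hg h'g
  simpa only [weight_sum σ hσ] using this

/-- Kronecker's lemma for Dirichlet series: if `Re s > 0` and `∑ f(n)/n^s` converges,
then `∑_{n ≤ x} f(n) = o(x^s)`. -/
theorem kronecker_dirichlet (f : ℕ → ℂ) (s : ℂ) (hs : 0 < s.re)
    (hconv : ∃ L : ℂ, Tendsto (fun N : ℕ => ∑ n ∈ Finset.Icc 1 N, f n / (n : ℂ) ^ s)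
      atTop (nhds L)) :
    Tendsto (fun x : ℝ => (∑ n ∈ Finset.Icc 1 ⌊x⌋₊, f n) / (x : ℂ) ^ s) atTop (nhds 0) := by
  obtain ⟨L, hL⟩ := hconv
  have hs0 : s ≠ 0 := fun h => by simp [h] at hs
  set σ := s.re with hσdef
  set S : ℕ → ℂ := fun N => ∑ n ∈ Finset.Icc 1 N, f n / (n : ℂ) ^ s with hSdef
  set T : ℕ → ℂ := fun n => S n - L with hTdef
  have hT0 : Tendsto T atTop (nhds 0) := by
    have := hL.sub_const L
    simpa using this
  set u : ℕ → ℂ := fun n => T n * (((n:ℂ)+1)^s - (n:ℂ)^s) with hudef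
  set B : ℕ → ℂ := fun N => ∑ n ∈ Finset.Icc 1 N, f n with hBdef
  -- Abel summation identity
  have key : ∀ N, 1 ≤ N → B N = L + T N * (N:ℂ)^s - ∑ n ∈ Ico 1 N, u n := by
    intro N hN
    induction N, hN using Nat.le_induction with
    | base =>
      simp [hBdef, hudef, hTdef, hSdef, Complex.one_cpow]
    | succ N hN ih =>
      have hcne : ((N:ℂ)+1) ≠ 0 := by
        have : (0:ℝ) < (N:ℝ)+1 := by positivity
        intro h
        have := congrArg Complex.re h
        simp at this
        linarith
      have hpne : ((N:ℂ)+1)^s ≠ 0 := by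
        rw [Ne, Complex.cpow_eq_zero_iff]
        tauto
      have hf : f (N+1) = (T (N+1) - T N) * ((N:ℂ)+1)^s := by
        have hstep : S (N+1) = S N + f (N+1) / ((N:ℂ)+1)^s := by
          simp only [hSdef]
          rw [Finset.sum_Icc_succ_top (Nat.le_add_left 1 N)]
          push_cast
          ring
        have : T (N+1) - T N = f (N+1) / ((N:ℂ)+1)^s := by
          rw [hTdef]; simp [hstep]
        rw [this, div_mul_cancel₀ _ hpne]
      have hBstep : B (N+1) = B N + f (N+1) := by
        rw [hBdef]
        exact Finset.sum_Icc_succ_top (by omega) f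
      rw [hBstep, ih, Finset.sum_Ico_succ_top (by omega), hf, hudef]
      push_cast
      ring
  -- little-o facts
  have hnormpow : ∀ n : ℕ, ‖(n:ℂ)^s‖ = (n:ℝ)^σ := by
    intro n
    rcases Nat.eq_zero_or_pos n with h | h
    · subst h
      simp [Complex.zero_cpow hs0, Real.zero_rpow hs.ne']
    · have h0 : (0:ℝ) < (n:ℝ) := by exact_mod_cast h
      rw [show ((n:ℕ):ℂ) = ((n:ℝ):ℂ) by push_cast; ring,
        Complex.norm_cpow_eq_rpow_re_of_pos h0]
  have hu_o : u =o[atTop] (fun n : ℕ => ((n:ℝ)+1)^σ - (n:ℝ)^σ) := by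
    have hT1 : T =o[atTop] (fun _ : ℕ => (1:ℝ)) := (isLittleO_one_iff ℝ).2 hT0
    have hv : (fun n : ℕ => ((n:ℂ)+1)^s - (n:ℂ)^s)
        =O[atTop] (fun n : ℕ => ((n:ℝ)+1)^σ - (n:ℝ)^σ) := by
      rw [isBigO_iff]
      refine ⟨‖s‖/σ, ?_⟩
      filter_upwards [eventually_ge_atTop 1] with n hn
      have hn0 : (0:ℝ) < (n:ℝ) := by exact_mod_cast hn
      have hle := cpow_diff_norm_le s hs hn0 (by linarith : (n:ℝ) ≤ (n:ℝ)+1)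
      have hg0 : 0 ≤ ((n:ℝ)+1)^σ - (n:ℝ)^σ := by
        have := Real.rpow_le_rpow hn0.le (by linarith : (n:ℝ) ≤ (n:ℝ)+1) hs.le
        linarith
      rw [Real.norm_eq_abs, abs_of_nonneg hg0]
      calc ‖((n:ℂ)+1)^s - (n:ℂ)^s‖ = ‖((((n:ℝ)+1:ℝ)):ℂ)^s - (((n:ℝ)):ℂ)^s‖ := by
            norm_cast
        _ ≤ (‖s‖/σ) * (((n:ℝ)+1)^σ - (n:ℝ)^σ) := hle
    have := hT1.mul_isBigO hv
    simpa using this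
  have hsum_o : (fun N : ℕ => ∑ n ∈ range N, u n) =o[atTop] (fun N : ℕ => (N:ℝ)^σ) :=
    aux_sum_o σ hs u hu_o
  have hrpow_atTop : Tendsto (fun N : ℕ => ‖(N:ℝ)^σ‖) atTop atTop := by
    apply Tendsto.congr' ?_ ((tendsto_rpow_atTop hs).comp tendsto_natCast_atTop_atTop)
    filter_upwards with n
    rw [Real.norm_eq_abs, abs_of_nonneg (Real.rpow_nonneg (Nat.cast_nonneg n) σ)]
    rfl
  have hconst_o : (fun _ : ℕ => L + u 0) =o[atTop] (fun N : ℕ => (N:ℝ)^σ) :=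
    isLittleO_const_left.2 (Or.inr hrpow_atTop)
  have hTN_o : (fun N : ℕ => T N * (N:ℂ)^s) =o[atTop] (fun N : ℕ => (N:ℝ)^σ) := by
    have hT1 : T =o[atTop] (fun _ : ℕ => (1:ℝ)) := (isLittleO_one_iff ℝ).2 hT0
    have hb : (fun N : ℕ => (N:ℂ)^s) =O[atTop] (fun N : ℕ => (N:ℝ)^σ) := by
      apply isBigO_of_le
      intro n
      rw [hnormpow n, Real.norm_eq_abs, abs_of_nonneg (Real.rpow_nonneg (Nat.cast_nonneg n) σ)]
    have := hT1.mul_isBigO hb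
    simpa using this
  have hB_o : B =o[atTop] (fun N : ℕ => (N:ℝ)^σ) := by
    apply ((hconst_o.add hTN_o).sub hsum_o).congr' ?_ (EventuallyEq.refl _ _)
    filter_upwards [eventually_ge_atTop 1] with N hN
    have hsplit : ∑ n ∈ range N, u n = u 0 + ∑ n ∈ Ico 1 N, u n := by
      rw [range_eq_Ico]
      exact Finset.sum_eq_sum_Ico_succ_bot hN u
    rw [key N hN, hsplit]
    ring
  -- pass to the limit
  have hquot : Tendsto (fun N : ℕ => ‖B N‖ / (N:ℝ)^σ) atTop (nhds 0) := by
    have := hB_o.norm_norm.tendsto_div_nhds_zero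
    apply this.congr
    intro N
    rw [Real.norm_eq_abs, abs_of_nonneg (Real.rpow_nonneg (Nat.cast_nonneg N) σ)]
  have hcomp : Tendsto (fun x : ℝ => ‖B ⌊x⌋₊‖ / ((⌊x⌋₊ : ℕ):ℝ)^σ) atTop (nhds 0) :=
    hquot.comp tendsto_nat_floor_atTop
  apply squeeze_zero_norm' ?_ hcomp
  filter_upwards [eventually_ge_atTop (1:ℝ)] with x hx
  have hx0 : (0:ℝ) < x := by linarith
  have hfl1 : 1 ≤ ⌊x⌋₊ := (Nat.one_le_floor_iff x).mpr hx
  have hflx : ((⌊x⌋₊:ℕ):ℝ) ≤ x := Nat.floor_le hx0.le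
  have hflpos : (0:ℝ) < ((⌊x⌋₊:ℕ):ℝ) := by exact_mod_cast hfl1
  have hxnorm : ‖(x:ℂ)^s‖ = x^σ := by
    rw [Complex.norm_cpow_eq_rpow_re_of_pos hx0]
  rw [norm_div, hxnorm]
  show ‖B ⌊x⌋₊‖ / x ^ σ ≤ ‖B ⌊x⌋₊‖ / ((⌊x⌋₊:ℕ):ℝ) ^ σ
  exact div_le_div_of_nonneg_left (norm_nonneg _) (Real.rpow_pos_of_pos hflpos σ)
    (Real.rpow_le_rpow hflpos.le hflx hs.le)
end

section
/- ∑_{n ≤ x} ((1/Id) * (σ/Id³))(n) = ζ(2)ζ(3) ln x + o(ln x) as x → ∞, where (1/Id)(n) = 1/n and (σ/Id³)(n) = σ(n)/n³. -/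
open Filter Finset Topology

section Aux

open Topology
open scoped LSeries.notation

/-- The summatory arithmetic function `σ(e)/e³` as a complex number. -/
noncomputable def gC (e : ℕ) : ℂ := (∑ d ∈ e.divisors, (d : ℂ)) / (e : ℂ) ^ 3

/-- Harmonic number as a real. -/
noncomputable def Hr (M : ℕ) : ℝ := ∑ d ∈ Icc 1 M, (d : ℝ)⁻¹

lemma rearr (F : ℕ → ℕ → ℂ) (N : ℕ) :
    ∑ n ∈ Icc 1 N, ∑ p ∈ n.divisorsAntidiagonal, F p.1 p.2
      = ∑ e ∈ Icc 1 N, ∑ d ∈ Icc 1 (N / e), F d e := by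
  have hdisj : (↑(Icc 1 N) : Set ℕ).PairwiseDisjoint Nat.divisorsAntidiagonal := by
    intro m hm n hn hmn
    simp only [Finset.disjoint_left]
    intro p hpm hpn
    rw [Nat.mem_divisorsAntidiagonal] at hpm hpn
    exact hmn (hpm.1.symm.trans hpn.1)
  rw [← Finset.sum_biUnion hdisj]
  have hset : (Icc 1 N).biUnion Nat.divisorsAntidiagonal
      = (Icc 1 N ×ˢ Icc 1 N).filter fun p => p.1 * p.2 ≤ N := by
    ext p
    simp only [Finset.mem_biUnion, Finset.mem_filter, Finset.mem_product, Finset.mem_Icc,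
      Nat.mem_divisorsAntidiagonal]
    constructor
    · rintro ⟨n, ⟨h1, h2⟩, rfl, -⟩
      have hp1 : 1 ≤ p.1 := Nat.pos_of_ne_zero (by intro h; rw [h] at h1; simp at h1)
      have hp2 : 1 ≤ p.2 := Nat.pos_of_ne_zero (by intro h; rw [h] at h1; simp at h1)
      exact ⟨⟨⟨hp1, le_trans (Nat.le_mul_of_pos_right _ hp2) h2⟩,
        ⟨hp2, le_trans (Nat.le_mul_of_pos_left _ hp1) h2⟩⟩, h2⟩
    · rintro ⟨⟨⟨h1, -⟩, ⟨h2, -⟩⟩, hle⟩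
      exact ⟨p.1 * p.2, ⟨Nat.mul_pos h1 h2, hle⟩, rfl, by positivity⟩
  rw [hset, Finset.sum_filter, Finset.sum_product_right]
  refine Finset.sum_congr rfl fun e he => ?_
  rw [Finset.mem_Icc] at he
  have he1 : 0 < e := he.1
  rw [← Finset.sum_filter]
  congr 1
  ext d
  simp only [Finset.mem_filter, Finset.mem_Icc, Nat.le_div_iff_mul_le he1]
  constructor
  · rintro ⟨⟨h1, -⟩, h3⟩; exact ⟨h1, h3⟩
  · rintro ⟨h1, h3⟩
    exact ⟨⟨h1, le_trans (Nat.le_mul_of_pos_right _ he1) h3⟩, h3⟩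

lemma term_id (n : ℕ) : LSeries.term (fun n => (n : ℂ)) 3 n = LSeries.term 1 2 n := by
  rcases eq_or_ne n 0 with rfl | hn
  · simp
  rw [LSeries.term_of_ne_zero hn, LSeries.term_of_ne_zero hn]
  have hn' : (n : ℂ) ≠ 0 := Nat.cast_ne_zero.mpr hn
  have h3 : (n : ℂ) ^ (3 : ℂ) = (n : ℂ) ^ (2 : ℂ) * n := by
    rw [show (3 : ℂ) = 2 + 1 by norm_num, Complex.cpow_add _ _ hn', Complex.cpow_one]
  rw [h3, Pi.one_apply]
  have h2 : (n : ℂ) ^ (2 : ℂ) ≠ 0 := by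
    simp [Complex.cpow_def_of_ne_zero hn', Complex.exp_ne_zero]
  field_simp

lemma gC_tendsto :
    Tendsto (fun N => ∑ e ∈ Icc 1 N, gC e) atTop
      (𝓝 (riemannZeta 2 * riemannZeta 3)) := by
  have h1 : LSeriesHasSum 1 3 (riemannZeta 3) := LSeriesHasSum_one (by norm_num)
  have h2 : LSeriesHasSum (fun n => (n : ℂ)) 3 (riemannZeta 2) := by
    have := LSeriesHasSum_one (s := 2) (by norm_num)
    unfold LSeriesHasSum at this ⊢
    rw [funext term_id]
    exact this
  have hconv := h1.convolution h2
  have hterm : ∀ n : ℕ, LSeries.term (1 ⍟ fun n => (n : ℂ)) 3 n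
      = if n = 0 then 0 else gC n := by
    intro n
    rcases eq_or_ne n 0 with rfl | hn
    · simp
    rw [LSeries.term_of_ne_zero hn, if_neg hn]
    have : (1 ⍟ fun n => (n : ℂ)) n = ∑ d ∈ n.divisors, (d : ℂ) := by
      rw [LSeries.convolution_def]
      dsimp only
      rw [Nat.sum_divisorsAntidiagonal' (f := fun x y => (1 : ℕ → ℂ) x * (y : ℂ))]
      simp
    rw [this, gC]
    congr 1
    rw [show (3 : ℂ) = ((3 : ℕ) : ℂ) by norm_num, Complex.cpow_natCast]
  unfold LSeriesHasSum at hconv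
  rw [show LSeries.term (1 ⍟ fun n => (n : ℂ)) 3 = fun n => if n = 0 then 0 else gC n
    from funext hterm] at hconv
  have h4 := hconv.tendsto_sum_nat
  have h5 : ∀ N : ℕ, ∑ i ∈ range (N + 1), (if i = 0 then 0 else gC i)
      = ∑ e ∈ Icc 1 N, gC e := by
    intro N
    have : range (N + 1) = insert 0 (Icc 1 N) := by
      ext i; simp [Nat.lt_succ_iff]; omega
    rw [this, Finset.sum_insert (by simp), if_pos rfl, zero_add]
    exact Finset.sum_congr rfl fun i hi => if_neg (by rw [mem_Icc] at hi; omega)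
  have h6 := h4.comp (tendsto_add_atTop_nat 1)
  simp only [Function.comp_def] at h6
  rw [mul_comm]
  exact Tendsto.congr (fun N => h5 N) h6

lemma Hr_eq (M : ℕ) : Hr M = (harmonic M : ℝ) := by
  rw [Hr, harmonic_eq_sum_Icc]
  push_cast
  rfl

lemma Hr_le (M : ℕ) : Hr M ≤ 1 + Real.log M := by
  rw [Hr_eq]; exact_mod_cast harmonic_le_one_add_log M

lemma le_Hr (M : ℕ) : Real.log M ≤ Hr M := by
  rcases Nat.eq_zero_or_pos M with rfl | hM
  · simp [Hr]
  calc Real.log M ≤ Real.log (M + 1) := by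
        apply Real.log_le_log (by positivity); linarith
    _ ≤ (harmonic M : ℝ) := by exact_mod_cast log_add_one_le_harmonic M
    _ = Hr M := (Hr_eq M).symm

lemma log_le_rpow {e : ℕ} (he : 1 ≤ e) : Real.log e ≤ 4 * (e : ℝ) ^ ((1 : ℝ)/4) := by
  have he' : (0 : ℝ) < e := by exact_mod_cast he
  have h1 : Real.log ((e : ℝ) ^ ((1 : ℝ)/4)) = (1/4) * Real.log e := Real.log_rpow he' _
  have h2 : Real.log ((e : ℝ) ^ ((1 : ℝ)/4)) ≤ (e : ℝ) ^ ((1 : ℝ)/4) := by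
    have := Real.log_le_sub_one_of_pos (x := (e : ℝ) ^ ((1 : ℝ)/4)) (by positivity)
    linarith
  linarith [h1 ▸ h2]

lemma one_le_rpow {e : ℕ} (he : 1 ≤ e) : (1 : ℝ) ≤ (e : ℝ) ^ ((1 : ℝ)/4) :=
  Real.one_le_rpow (by exact_mod_cast he) (by norm_num)

lemma gC_norm_le {e : ℕ} (he : 1 ≤ e) : ‖gC e‖ ≤ (1 + Real.log e) / (e : ℝ) ^ 2 := by
  have he' : (0 : ℝ) < e := by exact_mod_cast he
  have he0 : e ≠ 0 := by omega
  have hs : ∑ d ∈ e.divisors, (d : ℝ) ≤ e * (1 + Real.log e) := by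
    calc ∑ d ∈ e.divisors, (d : ℝ) = ∑ d ∈ e.divisors, ((e / d : ℕ) : ℝ) := by
          rw [Nat.sum_div_divisors]
      _ ≤ ∑ d ∈ e.divisors, (e : ℝ) / d := by
          refine Finset.sum_le_sum fun d hd => Nat.cast_div_le
      _ ≤ ∑ d ∈ Icc 1 e, (e : ℝ) / d := by
          refine Finset.sum_le_sum_of_subset_of_nonneg ?_ (fun d _ _ => by positivity)
          intro d hd
          rw [Nat.mem_divisors] at hd
          rw [mem_Icc]
          exact ⟨Nat.pos_of_dvd_of_pos hd.1 (Nat.pos_of_ne_zero hd.2),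
            Nat.le_of_dvd (Nat.pos_of_ne_zero hd.2) hd.1⟩
      _ = e * Hr e := by
          rw [Hr, Finset.mul_sum]
          exact Finset.sum_congr rfl fun d _ => by rw [div_eq_mul_inv]
      _ ≤ e * (1 + Real.log e) := by
          exact mul_le_mul_of_nonneg_left (Hr_le e) (le_of_lt he')
  have hnorm : ‖gC e‖ = (∑ d ∈ e.divisors, (d : ℝ)) / (e : ℝ) ^ 3 := by
    have : gC e = (((∑ d ∈ e.divisors, (d : ℝ)) / (e : ℝ) ^ 3 : ℝ) : ℂ) := by
      rw [gC]; push_cast; ring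
    rw [this, Complex.norm_real]; exact abs_of_nonneg (by positivity)
  rw [hnorm]
  rw [div_le_div_iff₀ (by positivity) (by positivity)]
  calc (∑ d ∈ e.divisors, (d : ℝ)) * (e : ℝ) ^ 2 ≤ (e * (1 + Real.log e)) * (e : ℝ) ^ 2 := by
        apply mul_le_mul_of_nonneg_right hs (by positivity)
    _ = (1 + Real.log e) * (e : ℝ) ^ 3 := by ring

lemma harmonic_err {N e : ℕ} (he : 1 ≤ e) (heN : e ≤ N) :
    |Hr (N / e) - Real.log N| ≤ 2 + Real.log e := by
  have hM : 1 ≤ N / e := (Nat.one_le_div_iff (by omega)).mpr heN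
  have hM' : (1 : ℝ) ≤ (N / e : ℕ) := by exact_mod_cast hM
  have hN1 : (1 : ℝ) ≤ (N : ℝ) := by exact_mod_cast le_trans he heN
  have hle : Real.log e ≥ 0 := Real.log_nonneg (by exact_mod_cast he)
  have hup : Hr (N / e) - Real.log N ≤ 2 + Real.log e := by
    have h1 : Hr (N / e) ≤ 1 + Real.log (N / e : ℕ) := Hr_le _
    have h2 : Real.log (N / e : ℕ) ≤ Real.log N := by
      apply Real.log_le_log (by linarith)
      exact_mod_cast Nat.div_le_self N e
    linarith
  have hlo : Real.log N - Hr (N / e) ≤ 2 + Real.log e := by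
    have h1 : Real.log (N / e : ℕ) ≤ Hr (N / e) := le_Hr _
    have h2 : N < (N / e + 1) * e := by
      rw [← Nat.div_lt_iff_lt_mul (by omega)]; omega
    have h3 : Real.log N ≤ Real.log ((N / e + 1 : ℕ) * (e : ℝ)) := by
      apply Real.log_le_log (by linarith)
      push_cast
      exact_mod_cast le_of_lt h2
    have h4 : Real.log ((N / e + 1 : ℕ) * (e : ℝ)) = Real.log (N / e + 1 : ℕ) + Real.log e := by
      rw [Real.log_mul (by positivity) (by positivity)]
    have h5 : Real.log ((N / e + 1 : ℕ) : ℝ) ≤ Real.log (2 * ((N / e : ℕ) : ℝ)) := by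
      apply Real.log_le_log (by positivity)
      push_cast; linarith
    have h6 : Real.log (2 * ((N / e : ℕ) : ℝ)) = Real.log 2 + Real.log (N / e : ℕ) := by
      rw [Real.log_mul (by norm_num) (by positivity)]
    have h7 : Real.log 2 ≤ 1 := by
      have := Real.log_le_sub_one_of_pos (x := 2) (by norm_num); linarith
    linarith
  rw [abs_le]; constructor <;> linarith

lemma wsummable : Summable (fun e : ℕ => (e : ℝ) ^ (-(3 : ℝ)/2)) :=
  Real.summable_nat_rpow.mpr (by norm_num)

noncomputable def cB : ℝ := 30 * ∑' e : ℕ, (e : ℝ) ^ (-(3 : ℝ)/2)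

lemma per_e {e : ℕ} (he : 1 ≤ e) :
    (1 + Real.log e) / (e : ℝ) ^ 2 * (2 + Real.log e) ≤ 30 * (e : ℝ) ^ (-(3 : ℝ)/2) := by
  have he' : (0 : ℝ) < e := by exact_mod_cast he
  set t : ℝ := (e : ℝ) ^ ((1 : ℝ)/4) with ht
  have ht1 : (1 : ℝ) ≤ t := one_le_rpow he
  have hlog : Real.log e ≤ 4 * t := log_le_rpow he
  have hlog0 : 0 ≤ Real.log e := Real.log_nonneg (by exact_mod_cast he)
  rw [div_mul_eq_mul_div, div_le_iff₀ (by positivity)]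
  have hsq : (e : ℝ) ^ (2 : ℕ) = (e : ℝ) ^ (2 : ℝ) := by
    rw [← Real.rpow_natCast]; norm_num
  have hhalf : (e : ℝ) ^ (-(3 : ℝ)/2) * (e : ℝ) ^ (2 : ℝ) = (e : ℝ) ^ ((1 : ℝ)/2) := by
    rw [← Real.rpow_add he']; norm_num
  have htt : t * t = (e : ℝ) ^ ((1 : ℝ)/2) := by
    rw [ht, ← Real.rpow_add he']; norm_num
  calc (1 + Real.log e) * (2 + Real.log e) ≤ (5 * t) * (6 * t) := by
        apply mul_le_mul (by linarith) (by linarith) (by linarith) (by positivity)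
    _ = 30 * (t * t) := by ring
    _ = 30 * ((e : ℝ) ^ (-(3 : ℝ)/2) * (e : ℝ) ^ (2 : ℝ)) := by rw [htt, hhalf]
    _ = 30 * (e : ℝ) ^ (-(3 : ℝ)/2) * (e : ℝ) ^ (2 : ℕ) := by rw [hsq]; ring

lemma key (N : ℕ) :
    ‖(∑ e ∈ Icc 1 N, gC e * ((Hr (N / e) : ℝ) : ℂ))
      - (∑ e ∈ Icc 1 N, gC e) * ((Real.log N : ℝ) : ℂ)‖ ≤ cB := by
  rw [Finset.sum_mul, ← Finset.sum_sub_distrib]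
  calc ‖∑ e ∈ Icc 1 N, (gC e * ((Hr (N / e) : ℝ) : ℂ) - gC e * ((Real.log N : ℝ) : ℂ))‖
      ≤ ∑ e ∈ Icc 1 N, ‖gC e * ((Hr (N / e) : ℝ) : ℂ) - gC e * ((Real.log N : ℝ) : ℂ)‖ :=
        norm_sum_le _ _
    _ ≤ ∑ e ∈ Icc 1 N, 30 * (e : ℝ) ^ (-(3 : ℝ)/2) := by
        refine Finset.sum_le_sum fun e he => ?_
        rw [mem_Icc] at he
        have h1 : gC e * ((Hr (N / e) : ℝ) : ℂ) - gC e * ((Real.log N : ℝ) : ℂ)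
            = gC e * (((Hr (N / e) - Real.log N : ℝ)) : ℂ) := by push_cast; ring
        rw [h1, norm_mul, Complex.norm_real, Real.norm_eq_abs]
        calc ‖gC e‖ * |Hr (N / e) - Real.log N|
            ≤ ((1 + Real.log e) / (e : ℝ) ^ 2) * (2 + Real.log e) := by
              apply mul_le_mul (gC_norm_le he.1) (harmonic_err he.1 he.2) (abs_nonneg _)
              have : (0:ℝ) ≤ Real.log e := Real.log_nonneg (by exact_mod_cast he.1)
              positivity
          _ ≤ 30 * (e : ℝ) ^ (-(3 : ℝ)/2) := per_e he.1
    _ = 30 * ∑ e ∈ Icc 1 N, (e : ℝ) ^ (-(3 : ℝ)/2) := by rw [Finset.mul_sum]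
    _ ≤ cB := by
        rw [cB]
        apply mul_le_mul_of_nonneg_left _ (by norm_num)
        exact Summable.sum_le_tsum _ (fun e _ => Real.rpow_nonneg (Nat.cast_nonneg e) _) wsummable

/-- Eventually bounded functions are little-o of `log`. -/
lemma bounded_isLittleO_log {f : ℝ → ℂ} (C : ℝ) (h : ∀ᶠ x in atTop, ‖f x‖ ≤ C) :
    f =o[atTop] fun x : ℝ => Real.log x := by
  have h1 : f =O[atTop] (fun _ : ℝ => (1 : ℝ)) := by
    rw [Asymptotics.isBigO_iff]
    exact ⟨C, by filter_upwards [h] with x hx using by simpa using hx⟩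
  refine h1.trans_isLittleO ?_
  rw [Asymptotics.isLittleO_const_left]
  right
  have : Tendsto (fun x : ℝ => Real.log x) atTop atTop := Real.tendsto_log_atTop
  refine Tendsto.congr' ?_ this
  filter_upwards [eventually_ge_atTop (1 : ℝ)] with x hx
  simp [Real.norm_eq_abs, abs_of_nonneg (Real.log_nonneg hx)]

end Aux

/-- `∑_{n ≤ x} ((1/Id) * (σ/Id³))(n) = ζ(2)ζ(3) ln x + o(ln x)`. -/
theorem conv_sigma_log_mean :
    (fun x : ℝ => (∑ n ∈ Finset.Icc 1 ⌊x⌋₊,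
        ∑ d ∈ n.divisors, 1 / (d : ℂ) *
          ((∑ e ∈ (n / d).divisors, (e : ℂ)) / ((n / d : ℕ) : ℂ) ^ 3)) -
        riemannZeta 2 * riemannZeta 3 * (Real.log x : ℂ))
      =o[atTop] fun x : ℝ => Real.log x := by
  set c : ℂ := riemannZeta 2 * riemannZeta 3 with hc
  set S : ℕ → ℂ := fun N => ∑ e ∈ Icc 1 N, gC e with hS
  set T : ℕ → ℂ := fun N => ∑ e ∈ Icc 1 N, gC e * ((Hr (N / e) : ℝ) : ℂ) with hT
  -- Step 1: rewrite the double sum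
  have hstep1 : ∀ N : ℕ, (∑ n ∈ Finset.Icc 1 N,
      ∑ d ∈ n.divisors, 1 / (d : ℂ) *
        ((∑ e ∈ (n / d).divisors, (e : ℂ)) / ((n / d : ℕ) : ℂ) ^ 3)) = T N := by
    intro N
    have h1 : ∀ n : ℕ, (∑ d ∈ n.divisors, 1 / (d : ℂ) *
        ((∑ e ∈ (n / d).divisors, (e : ℂ)) / ((n / d : ℕ) : ℂ) ^ 3))
        = ∑ p ∈ n.divisorsAntidiagonal, 1 / (p.1 : ℂ) * gC p.2 := by
      intro n
      rw [Nat.sum_divisorsAntidiagonal (f := fun d e => 1 / (d : ℂ) * gC e)]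
      rfl
    simp only [h1]
    rw [rearr (fun d e => 1 / (d : ℂ) * gC e) N]
    refine Finset.sum_congr rfl fun e he => ?_
    rw [← Finset.sum_mul, mul_comm]
    congr 1
    rw [Hr]
    push_cast
    exact Finset.sum_congr rfl fun d _ => (one_div _)
  -- decompose
  have hdecomp : (fun x : ℝ => (∑ n ∈ Finset.Icc 1 ⌊x⌋₊,
      ∑ d ∈ n.divisors, 1 / (d : ℂ) *
        ((∑ e ∈ (n / d).divisors, (e : ℂ)) / ((n / d : ℕ) : ℂ) ^ 3)) -
      c * (Real.log x : ℂ))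
      = fun x : ℝ =>
        (T ⌊x⌋₊ - S ⌊x⌋₊ * ((Real.log ⌊x⌋₊ : ℝ) : ℂ))
        + (S ⌊x⌋₊ - c) * ((Real.log ⌊x⌋₊ : ℝ) : ℂ)
        + c * (((Real.log ⌊x⌋₊ : ℝ) : ℂ) - ((Real.log x : ℝ) : ℂ)) := by
    funext x
    rw [hstep1]
    ring
  rw [hdecomp]
  have hf1 : (fun x : ℝ => T ⌊x⌋₊ - S ⌊x⌋₊ * ((Real.log ⌊x⌋₊ : ℝ) : ℂ))
      =o[atTop] fun x : ℝ => Real.log x := by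
    refine bounded_isLittleO_log cB ?_
    filter_upwards with x
    exact key ⌊x⌋₊
  have hf3 : (fun x : ℝ => c * (((Real.log ⌊x⌋₊ : ℝ) : ℂ) - ((Real.log x : ℝ) : ℂ)))
      =o[atTop] fun x : ℝ => Real.log x := by
    refine bounded_isLittleO_log (‖c‖ * 1) ?_
    filter_upwards [eventually_ge_atTop (1 : ℝ)] with x hx
    rw [norm_mul]
    refine mul_le_mul_of_nonneg_left ?_ (norm_nonneg c)
    have hfl : (1 : ℕ) ≤ ⌊x⌋₊ := Nat.le_floor (by exact_mod_cast hx)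
    have hfl' : (1 : ℝ) ≤ (⌊x⌋₊ : ℝ) := by exact_mod_cast hfl
    have h1 : Real.log ⌊x⌋₊ ≤ Real.log x :=
      Real.log_le_log (by linarith) (Nat.floor_le (by linarith))
    have h2 : Real.log x ≤ 1 + Real.log ⌊x⌋₊ := by
      have hx2 : x ≤ 2 * (⌊x⌋₊ : ℝ) := by
        have := Nat.lt_floor_add_one x
        linarith
      calc Real.log x ≤ Real.log (2 * (⌊x⌋₊ : ℝ)) := Real.log_le_log (by linarith) hx2
        _ = Real.log 2 + Real.log ⌊x⌋₊ := Real.log_mul (by norm_num) (by positivity)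
        _ ≤ 1 + Real.log ⌊x⌋₊ := by
            have := Real.log_le_sub_one_of_pos (x := (2:ℝ)) (by norm_num); linarith
    have : ‖(((Real.log ⌊x⌋₊ : ℝ) : ℂ) - ((Real.log x : ℝ) : ℂ))‖
        = |Real.log ⌊x⌋₊ - Real.log x| := by
      rw [← Complex.ofReal_sub, Complex.norm_real, Real.norm_eq_abs]
    rw [this, abs_le]
    constructor <;> linarith
  have hf2 : (fun x : ℝ => (S ⌊x⌋₊ - c) * ((Real.log ⌊x⌋₊ : ℝ) : ℂ))
      =o[atTop] fun x : ℝ => Real.log x := by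
    rw [Asymptotics.isLittleO_iff]
    intro ε hε
    have htend : Tendsto (fun x : ℝ => S ⌊x⌋₊) atTop (𝓝 c) :=
      gC_tendsto.comp (tendsto_nat_floor_atTop (α := ℝ))
    have hev : ∀ᶠ x : ℝ in atTop, ‖S ⌊x⌋₊ - c‖ ≤ ε := by
      have h' : Tendsto (fun x : ℝ => ‖S ⌊x⌋₊ - c‖) atTop (𝓝 0) := by
        simpa using (htend.sub_const c).norm
      exact h'.eventually (eventually_le_nhds hε)
    filter_upwards [hev, eventually_ge_atTop (1 : ℝ)] with x hx hx1
    have hfl : (1 : ℕ) ≤ ⌊x⌋₊ := Nat.le_floor (by exact_mod_cast hx1)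
    have hfl' : (1 : ℝ) ≤ (⌊x⌋₊ : ℝ) := by exact_mod_cast hfl
    have h1 : Real.log ⌊x⌋₊ ≤ Real.log x :=
      Real.log_le_log (by linarith) (Nat.floor_le (by linarith))
    have h0 : 0 ≤ Real.log ⌊x⌋₊ := Real.log_nonneg hfl'
    rw [norm_mul, Complex.norm_real, Real.norm_eq_abs, abs_of_nonneg h0,
      Real.norm_eq_abs, abs_of_nonneg (le_trans h0 h1)]
    calc ‖S ⌊x⌋₊ - c‖ * Real.log ⌊x⌋₊ ≤ ε * Real.log x := by
          apply mul_le_mul hx h1 h0 (le_of_lt hε)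
      _ = ε * Real.log x := rfl
  exact (hf1.add hf2).add hf3
end

section
/- Let f : ℕ → ℂ be an arithmetic function and s a complex number such that ∑_{n=1}^∞ f(n)/n^s converges. Then for any natural number k with Re(s − k) > 0, ∑_{n ≤ x} f(n)/n^k = o(x^{s−k}) as x → ∞. -/
open Filter Finset Asymptotics Topology

/-- If `∑ f(n)/n^s` converges and `Re(s - k) > 0`, then `∑_{n ≤ x} f(n)/n^k = o(x^(s-k))`. -/
theorem kronecker_generalized_pow (f : ℕ → ℂ) (s : ℂ)
    (hconv : ∃ L : ℂ, Tendsto (fun N : ℕ => ∑ n ∈ Finset.Icc 1 N, f n / (n : ℂ) ^ s)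
      atTop (nhds L))
    (k : ℕ) (hk : 0 < (s - k).re) :
    Tendsto (fun x : ℝ => (∑ n ∈ Finset.Icc 1 ⌊x⌋₊, f n / (n : ℂ) ^ k) / (x : ℂ) ^ (s - k))
      atTop (nhds 0) := by
  obtain ⟨L, hL⟩ := hconv
  set c : ℂ := s - k with hc_def
  have hc : c ≠ 0 := by
    intro h
    rw [h] at hk
    simp at hk
  set σ : ℝ := c.re with hσ_def
  have hσ : 0 < σ := hk
  set A : ℕ → ℂ := fun N => ∑ n ∈ Finset.Icc 1 N, f n / (n : ℂ) ^ s with hA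
  set w : ℕ → ℂ := fun n => (n : ℂ) ^ c with hw
  set e : ℕ → ℂ := fun n => A n - L with he
  have he0 : Tendsto e atTop (𝓝 0) := by
    have := hL.sub_const L
    simpa using this
  -- Abel summation identity
  have habel : ∀ N, ∑ n ∈ Finset.Icc 1 N, f n / (n : ℂ) ^ k
      = A N * w N - ∑ n ∈ range N, A n * (w (n + 1) - w n) := by
    intro N
    induction N with
    | zero => simp [hA, hw]
    | succ N ih =>
      rw [Finset.sum_Icc_succ_top (by omega), ih, Finset.sum_range_succ]
      have hA1 : A (N + 1) = A N + f (N + 1) / ((N + 1 : ℕ) : ℂ) ^ s := by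
        rw [hA]
        exact Finset.sum_Icc_succ_top (by omega) _
      have hn0 : ((N + 1 : ℕ) : ℂ) ≠ 0 := Nat.cast_ne_zero.mpr (by omega)
      have hns : ((N + 1 : ℕ) : ℂ) ^ s ≠ 0 := by
        intro h
        rcases (Complex.cpow_eq_zero_iff _ _).mp h with ⟨h1, _⟩
        exact hn0 h1
      have hkey : f (N + 1) / ((N + 1 : ℕ) : ℂ) ^ k
          = f (N + 1) / ((N + 1 : ℕ) : ℂ) ^ s * w (N + 1) := by
        show _ = _ * ((N + 1 : ℕ) : ℂ) ^ c
        rw [hc_def, Complex.cpow_sub _ _ hn0, Complex.cpow_natCast, div_mul_div_comm,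
          mul_comm (f (N + 1)), mul_div_mul_left _ _ hns]
      rw [hA1, hkey]
      ring
  have habel' : ∀ N, ∑ n ∈ Finset.Icc 1 N, f n / (n : ℂ) ^ k
      = e N * w N - ∑ n ∈ range N, e n * (w (n + 1) - w n) := by
    intro N
    rw [habel N]
    have h2 : ∑ n ∈ range N, (w (n + 1) - w n) = w N - w 0 := Finset.sum_range_sub w N
    have hw0 : w 0 = 0 := by
      show ((0 : ℕ) : ℂ) ^ c = 0
      rw [Nat.cast_zero]
      exact Complex.zero_cpow hc
    have h1 : ∑ n ∈ range N, A n * (w (n + 1) - w n)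
        = (∑ n ∈ range N, e n * (w (n + 1) - w n)) + L * (w N - w 0) := by
      rw [← h2, Finset.mul_sum, ← Finset.sum_add_distrib]
      refine Finset.sum_congr rfl fun n _ => ?_
      have hAe : A n = e n + L := by rw [he]; ring
      rw [hAe]; ring
    rw [h1, hw0]
    have hAe : A N = e N + L := by rw [he]; ring
    rw [hAe]
    ring
  -- Bound on increments of w
  have hΔ : ∀ n : ℕ, 1 ≤ n →
      ‖w (n + 1) - w n‖ ≤ (‖c‖ / σ) * (((n : ℝ) + 1) ^ σ - (n : ℝ) ^ σ) := by
    intro n hn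
    have hnpos : (0 : ℝ) < n := by exact_mod_cast hn
    have h0 : (0 : ℝ) ∉ Set.uIcc (n : ℝ) ((n : ℝ) + 1) := by
      rw [Set.uIcc_of_le (by linarith)]
      intro h
      exact absurd h.1 (by linarith)
    have hcm1 : c - 1 ≠ -1 := by
      intro h
      apply hc
      have := sub_eq_iff_eq_add.mp h
      simpa using this
    have hint := integral_cpow (a := (n : ℝ)) (b := (n : ℝ) + 1) (r := c - 1)
      (Or.inr ⟨hcm1, h0⟩)
    rw [sub_add_cancel] at hint
    have hwΔ : w (n + 1) - w n = c * ∫ t in (n : ℝ)..((n : ℝ) + 1), (t : ℂ) ^ (c - 1) := by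
      rw [hint, mul_div_cancel₀ _ hc]
      show ((n + 1 : ℕ) : ℂ) ^ c - ((n : ℕ) : ℂ) ^ c = _
      push_cast
      ring_nf
    have hσm1 : σ - 1 ≠ -1 := by
      intro h
      apply hσ.ne'
      linarith
    calc ‖w (n + 1) - w n‖ = ‖c‖ * ‖∫ t in (n : ℝ)..((n : ℝ) + 1), (t : ℂ) ^ (c - 1)‖ := by
          rw [hwΔ, norm_mul]
      _ ≤ ‖c‖ * ∫ t in (n : ℝ)..((n : ℝ) + 1), ‖(t : ℂ) ^ (c - 1)‖ := by
          gcongr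
          exact intervalIntegral.norm_integral_le_integral_norm (by linarith)
      _ = ‖c‖ * ∫ t in (n : ℝ)..((n : ℝ) + 1), t ^ (σ - 1) := by
          congr 1
          apply intervalIntegral.integral_congr
          intro t ht
          rw [Set.uIcc_of_le (by linarith)] at ht
          have htpos : 0 < t := lt_of_lt_of_le hnpos ht.1
          show ‖(t : ℂ) ^ (c - 1)‖ = t ^ (σ - 1)
          rw [Complex.norm_cpow_eq_rpow_re_of_pos htpos]
          congr 1
      _ = ‖c‖ * ((((n : ℝ) + 1) ^ σ - (n : ℝ) ^ σ) / σ) := by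
          rw [integral_rpow (Or.inr ⟨hσm1, h0⟩), sub_add_cancel]
      _ = (‖c‖ / σ) * (((n : ℝ) + 1) ^ σ - (n : ℝ) ^ σ) := by ring
  -- weighted Cesàro / little-o step
  set g : ℕ → ℝ := fun n => ((n : ℝ) + 1) ^ σ - (n : ℝ) ^ σ with hg
  have hg0 : ∀ n, 0 ≤ g n := fun n =>
    sub_nonneg.mpr (Real.rpow_le_rpow (Nat.cast_nonneg n) (by linarith) hσ.le)
  have hgsum : ∀ n : ℕ, ∑ i ∈ range n, g i = (n : ℝ) ^ σ := by
    intro n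
    have := Finset.sum_range_sub (fun i : ℕ => (i : ℝ) ^ σ) n
    simp only [Nat.cast_zero, Real.zero_rpow hσ.ne', sub_zero] at this
    rw [← this]
    refine Finset.sum_congr rfl fun i _ => ?_
    push_cast
    simp only [hg]
  have hgtop : Tendsto (fun n : ℕ => ∑ i ∈ range n, g i) atTop atTop := by
    simp only [hgsum]
    exact (tendsto_rpow_atTop hσ).comp tendsto_natCast_atTop_atTop
  have hO : (fun n => w (n + 1) - w n) =O[atTop] g := by
    rw [isBigO_iff]
    refine ⟨‖c‖ / σ, ?_⟩
    filter_upwards [eventually_ge_atTop 1] with n hn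
    rw [Real.norm_of_nonneg (hg0 n)]
    exact hΔ n hn
  have ho : (fun n => e n * (w (n + 1) - w n)) =o[atTop] g := by
    have := ((isLittleO_one_iff ℝ).2 he0).mul_isBigO hO
    simpa using this
  have hEo : (fun N => ∑ n ∈ range N, e n * (w (n + 1) - w n))
      =o[atTop] (fun N : ℕ => (N : ℝ) ^ σ) := by
    have h := ho.sum_range hg0 hgtop
    have heq : (fun n : ℕ => ∑ i ∈ range n, g i) = fun n : ℕ => (n : ℝ) ^ σ :=
      funext hgsum
    rwa [heq] at h
  set E : ℕ → ℂ := fun N => ∑ n ∈ range N, e n * (w (n + 1) - w n) with hE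
  have hEdiv : Tendsto (fun N : ℕ => ‖E N‖ / (N : ℝ) ^ σ) atTop (𝓝 0) :=
    hEo.norm_left.tendsto_div_nhds_zero
  -- final assembly
  have hfloor : Tendsto (fun x : ℝ => ⌊x⌋₊) atTop atTop := tendsto_nat_floor_atTop
  have hbound : Tendsto (fun x : ℝ => ‖e ⌊x⌋₊‖ + ‖E ⌊x⌋₊‖ / ((⌊x⌋₊ : ℕ) : ℝ) ^ σ)
      atTop (𝓝 0) := by
    have h1 : Tendsto (fun x : ℝ => ‖e ⌊x⌋₊‖) atTop (𝓝 0) :=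
      (tendsto_norm_zero.comp he0).comp hfloor
    have h2 : Tendsto (fun x : ℝ => ‖E ⌊x⌋₊‖ / ((⌊x⌋₊ : ℕ) : ℝ) ^ σ) atTop (𝓝 0) :=
      hEdiv.comp hfloor
    simpa using h1.add h2
  rw [tendsto_zero_iff_norm_tendsto_zero]
  apply squeeze_zero' (Filter.Eventually.of_forall fun x => norm_nonneg _) _ hbound
  filter_upwards [eventually_ge_atTop (1 : ℝ)] with x hx
  set N := ⌊x⌋₊ with hN
  have hN1 : 1 ≤ N := Nat.le_floor (by exact_mod_cast hx)
  have hNpos : (0 : ℝ) < N := by exact_mod_cast hN1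
  have hxpos : (0 : ℝ) < x := by linarith
  have hxσ : (0 : ℝ) < x ^ σ := Real.rpow_pos_of_pos hxpos σ
  have hNσ : (0 : ℝ) < ((N : ℕ) : ℝ) ^ σ := Real.rpow_pos_of_pos hNpos σ
  have hNx : ((N : ℕ) : ℝ) ^ σ ≤ x ^ σ :=
    Real.rpow_le_rpow (Nat.cast_nonneg N) (Nat.floor_le hxpos.le) hσ.le
  have hnormw : ‖w N‖ = ((N : ℕ) : ℝ) ^ σ := by
    rw [hw]
    exact Complex.norm_natCast_cpow_of_pos hN1 c
  have hnormx : ‖(x : ℂ) ^ c‖ = x ^ σ := by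
    exact Complex.norm_cpow_eq_rpow_re_of_pos hxpos c
  rw [norm_div, hnormx, habel' N]
  calc ‖e N * w N - E N‖ / x ^ σ
      ≤ (‖e N‖ * ((N : ℕ) : ℝ) ^ σ + ‖E N‖) / x ^ σ := by
        gcongr
        calc ‖e N * w N - E N‖ ≤ ‖e N * w N‖ + ‖E N‖ := norm_sub_le _ _
          _ = ‖e N‖ * ((N : ℕ) : ℝ) ^ σ + ‖E N‖ := by rw [norm_mul, hnormw]
    _ = ‖e N‖ * (((N : ℕ) : ℝ) ^ σ / x ^ σ) + ‖E N‖ / x ^ σ := by ring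
    _ ≤ ‖e N‖ * 1 + ‖E N‖ / ((N : ℕ) : ℝ) ^ σ := by
        gcongr
        · exact div_le_one_of_le₀ hNx hxσ.le
    _ = ‖e N‖ + ‖E N‖ / ((N : ℕ) : ℝ) ^ σ := by ring
end
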